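/- Let c ≥ 2 and let Φ : 𝒞(ℝ^c) → 𝒞(ℝ^d) be a non-trivial lattice homomorphism. Let C ∈ 𝒞(ℝ^c) and x ∈ ℝ^c with x ∉ C. Then Φ({x}) is not a subset of Φ(C), and Φ(conv({x} ∪ C)) \ Φ(C) ≠ ∅. -/

import Mathlib

open Set

noncomputable section

/-- Euclidean space `ℝ^n`. -/
abbrev E (n : ℕ) := EuclideanSpace ℝ (Fin n)

/-- A convex body of `ℝ^n`: a compact convex subset (possibly empty). -/
def IsBody {n : ℕ} (C : Set (E n)) : Prop := Convex ℝ C ∧ IsCompact C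

/-- `Φ` represents a lattice homomorphism from `𝒞(ℝ^c)` to `𝒞(ℝ^d)`: it maps convex bodies
to convex bodies, and on convex bodies it preserves intersections (the lattice meet) and
convex hulls of unions (the lattice join). -/
def IsLatHom {c d : ℕ} (Φ : Set (E c) → Set (E d)) : Prop :=
  (∀ C, IsBody C → IsBody (Φ C)) ∧
  ∀ C D : Set (E c), IsBody C → IsBody D →
    Φ (C ∩ D) = Φ C ∩ Φ D ∧ Φ (convexHull ℝ (C ∪ D)) = convexHull ℝ (Φ C ∪ Φ D)

/-- `Φ` is non-trivial: it is not constant on convex bodies. -/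
def NonTrivial {c d : ℕ} (Φ : Set (E c) → Set (E d)) : Prop :=
  ∃ C D : Set (E c), IsBody C ∧ IsBody D ∧ Φ C ≠ Φ D

/-- The closed ray emanating from `o` in direction `u`. -/
def Ray {n : ℕ} (o u : E n) : Set (E n) := {p | ∃ t : ℝ, 0 ≤ t ∧ p = o + t • u}

/-- An affine hyperplane of `ℝ^n`: a nonempty affine subspace of dimension `n - 1`. -/
def IsHyperplane {n : ℕ} (H : AffineSubspace ℝ (E n)) : Prop :=
  (H : Set (E n)).Nonempty ∧ Module.finrank ℝ H.direction + 1 = n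

open scoped Classical in
/-- The dimension of a convex set: the dimension of its affine hull, with `sdim ∅ = -1`. -/
def sdim {n : ℕ} (s : Set (E n)) : ℤ :=
  if s = ∅ then -1 else Module.finrank ℝ (affineSpan ℝ s).direction

/-!
If `Φ {x} ⊆ Φ C` with `x ∉ C`, then `Φ {x} = Φ ({x} ∩ C) = Φ ∅`. A point `y` with
`Φ {y} = Φ ∅` disappears from joins: `Φ (conv ({y} ∪ A)) = Φ A`. So if a body `S` lies in two
cones `conv ({y₁} ∪ A₁)`, `conv ({y₂} ∪ A₂)` with such apexes over disjoint bodies, then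
`Φ S ⊆ Φ A₁ ∩ Φ A₂ = Φ ∅`. Cones from `x` over two points beyond `y` on the line `xy` show
`Φ {y} = Φ ∅` for every `y`; cones from two points over far apart balls then show that `Φ` is
constant. The second claim follows because `{x} ⊆ conv ({x} ∪ C)`.
-/

theorem IsCompact.convexJoin {V : Type*} [AddCommGroup V] [Module ℝ V] [TopologicalSpace V]
    [IsTopologicalAddGroup V] [ContinuousSMul ℝ V] {s t : Set V} (hs : IsCompact s)
    (ht : IsCompact t) : IsCompact (_root_.convexJoin ℝ s t) := by
  have : _root_.convexJoin ℝ s t =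
      (fun p : (V × V) × ℝ => (1 - p.2) • p.1.1 + p.2 • p.1.2) '' ((s ×ˢ t) ×ˢ Icc 0 1) := by
    ext z
    simp only [mem_convexJoin, segment_eq_image, mem_image, mem_prod, Prod.exists]
    constructor
    · rintro ⟨a, ha, b, hb, θ, hθ, rfl⟩
      exact ⟨a, b, θ, ⟨⟨ha, hb⟩, hθ⟩, rfl⟩
    · rintro ⟨a, b, θ, ⟨⟨ha, hb⟩, hθ⟩, rfl⟩
      exact ⟨a, ha, b, hb, θ, hθ, rfl⟩
  rw [this]
  exact ((hs.prod ht).prod isCompact_Icc).image (by fun_prop)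

theorem closedBall_subset_convexHull_singleton_union_closedBall {V : Type*}
    [SeminormedAddCommGroup V] [NormedSpace ℝ V] (y : V) (R : ℝ) :
    Metric.closedBall 0 R ⊆ convexHull ℝ ({y} ∪ Metric.closedBall (-y) (2 * R)) := by
  intro p hp
  have hreflect : (2 : ℝ) • p - y ∈ Metric.closedBall (-y) (2 * R) := by
    rw [mem_closedBall_zero_iff] at hp
    rw [Metric.mem_closedBall, dist_eq_norm, sub_neg_eq_add, sub_add_cancel, norm_smul,
      Real.norm_two]
    gcongr
  refine segment_subset_convexHull (mem_union_left _ (mem_singleton y))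
    (mem_union_right _ hreflect)
    ⟨(1 / 2 : ℝ), 1 / 2, by norm_num, by norm_num, by norm_num, ?_⟩
  module

namespace IsBody

variable {n : ℕ} {A B : Set (E n)}

theorem empty : IsBody (∅ : Set (E n)) := ⟨convex_empty, isCompact_empty⟩

theorem singleton (x : E n) : IsBody ({x} : Set (E n)) := ⟨convex_singleton x, isCompact_singleton⟩

theorem closedBall (x : E n) (r : ℝ) : IsBody (Metric.closedBall x r) :=
  ⟨convex_closedBall x r, isCompact_closedBall x r⟩

theorem convexHull_union (hA : IsBody A) (hB : IsBody B) : IsBody (convexHull ℝ (A ∪ B)) := by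
  rcases A.eq_empty_or_nonempty with rfl | hA₀
  · rwa [empty_union, hB.1.convexHull_eq]
  rcases B.eq_empty_or_nonempty with rfl | hB₀
  · rwa [union_empty, hA.1.convexHull_eq]
  refine ⟨convex_convexHull ℝ _, ?_⟩
  rw [_root_.convexHull_union hA₀ hB₀, hA.1.convexHull_eq, hB.1.convexHull_eq]
  exact hA.2.convexJoin hB.2

end IsBody

namespace IsLatHom

variable {c d : ℕ} {Φ : Set (E c) → Set (E d)} {A B : Set (E c)}

theorem isBody_map (hΦ : IsLatHom Φ) (hA : IsBody A) : IsBody (Φ A) :=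
  hΦ.1 A hA

theorem map_inter (hΦ : IsLatHom Φ) (hA : IsBody A) (hB : IsBody B) :
    Φ (A ∩ B) = Φ A ∩ Φ B :=
  (hΦ.2 A B hA hB).1

theorem map_convexHull_union (hΦ : IsLatHom Φ) (hA : IsBody A) (hB : IsBody B) :
    Φ (convexHull ℝ (A ∪ B)) = convexHull ℝ (Φ A ∪ Φ B) :=
  (hΦ.2 A B hA hB).2

theorem mono (hΦ : IsLatHom Φ) (hA : IsBody A) (hB : IsBody B) (hAB : A ⊆ B) : Φ A ⊆ Φ B := by
  rw [← inter_eq_left.2 hAB, hΦ.map_inter hA hB]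
  exact inter_subset_right

theorem map_empty_subset (hΦ : IsLatHom Φ) (hA : IsBody A) : Φ ∅ ⊆ Φ A :=
  hΦ.mono IsBody.empty hA (empty_subset A)

theorem map_convexHull_singleton_union (hΦ : IsLatHom Φ) {y : E c} (hy : Φ {y} = Φ ∅)
    (hA : IsBody A) : Φ (convexHull ℝ ({y} ∪ A)) = Φ A := by
  rw [hΦ.map_convexHull_union (IsBody.singleton y) hA, hy,
    union_eq_self_of_subset_left (hΦ.map_empty_subset hA), (hΦ.isBody_map hA).1.convexHull_eq]

theorem eq_map_empty_of_subset_cones (hΦ : IsLatHom Φ) {y₁ y₂ : E c} (hy₁ : Φ {y₁} = Φ ∅)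
    (hy₂ : Φ {y₂} = Φ ∅) {A₁ A₂ S : Set (E c)} (hA₁ : IsBody A₁) (hA₂ : IsBody A₂)
    (hA : Disjoint A₁ A₂) (hS : IsBody S) (hS₁ : S ⊆ convexHull ℝ ({y₁} ∪ A₁))
    (hS₂ : S ⊆ convexHull ℝ ({y₂} ∪ A₂)) : Φ S = Φ ∅ := by
  refine (Subset.antisymm ?_ (hΦ.map_empty_subset hS))
  have h₁ := hΦ.mono hS ((IsBody.singleton y₁).convexHull_union hA₁) hS₁
  have h₂ := hΦ.mono hS ((IsBody.singleton y₂).convexHull_union hA₂) hS₂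
  rw [hΦ.map_convexHull_singleton_union hy₁ hA₁] at h₁
  rw [hΦ.map_convexHull_singleton_union hy₂ hA₂] at h₂
  rw [← hA.inter_eq, hΦ.map_inter hA₁ hA₂]
  exact subset_inter h₁ h₂

/-- `y` lies on the segments from `x` to the two distinct points `y + (y - x)` and
`y + 2 (y - x)`. -/
theorem map_singleton_eq_map_empty (hΦ : IsLatHom Φ) {x : E c} (hx : Φ {x} = Φ ∅) (y : E c) :
    Φ {y} = Φ ∅ := by
  rcases eq_or_ne y x with rfl | hyx
  · exact hx
  have hy_mem : ∀ t : ℝ, 0 < t → y ∈ convexHull ℝ ({x} ∪ {y + t • (y - x)}) := by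
    intro t ht
    rw [singleton_union, convexHull_pair]
    refine ⟨t / (t + 1), 1 / (t + 1), by positivity, by positivity, by field_simp, ?_⟩
    match_scalars <;> field_simp <;> ring
  refine hΦ.eq_map_empty_of_subset_cones hx hx (IsBody.singleton _) (IsBody.singleton _) ?_
    (IsBody.singleton y) (singleton_subset_iff.2 (hy_mem 1 one_pos))
    (singleton_subset_iff.2 (hy_mem 2 two_pos))
  rw [disjoint_singleton, ne_eq, add_right_inj]
  intro h
  exact hyx (sub_eq_zero.1 (by linear_combination (norm := module) -h))

/-- A body in `closedBall 0 R` lies in the cones from `0` and from `v` over the balls of radius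
`2 R` around `0` and `-v`, which are disjoint once `‖v‖ > 4 R`. -/
theorem eq_map_empty_of_forall_singleton [Nontrivial (E c)] (hΦ : IsLatHom Φ)
    (hpt : ∀ y, Φ {y} = Φ ∅) (hA : IsBody A) : Φ A = Φ ∅ := by
  obtain ⟨R, hR₀, hR⟩ := hA.2.isBounded.subset_closedBall_lt 0 0
  obtain ⟨v, hv⟩ := exists_norm_eq (E c) (by positivity : 0 ≤ 5 * R)
  refine hΦ.eq_map_empty_of_subset_cones (hpt 0) (hpt v) (IsBody.closedBall _ _)
    (IsBody.closedBall _ _) ?_ hA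
    (hR.trans (closedBall_subset_convexHull_singleton_union_closedBall 0 R))
    (hR.trans (closedBall_subset_convexHull_singleton_union_closedBall v R))
  apply Metric.closedBall_disjoint_closedBall
  rw [neg_zero, dist_zero_left, norm_neg, hv]
  linarith

theorem eq_map_empty_of_map_singleton (hΦ : IsLatHom Φ) {x : E c} (hx : Φ {x} = Φ ∅)
    (hA : IsBody A) : Φ A = Φ ∅ := by
  have hpt := hΦ.map_singleton_eq_map_empty hx
  rcases subsingleton_or_nontrivial (E c) with _ | _
  · rcases A.subsingleton_of_subsingleton.eq_empty_or_singleton with rfl | ⟨y, rfl⟩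
    exacts [rfl, hpt y]
  · exact hΦ.eq_map_empty_of_forall_singleton hpt hA

theorem map_singleton_ne_map_empty (hΦ : IsLatHom Φ) (hnt : NonTrivial Φ) (x : E c) :
    Φ {x} ≠ Φ ∅ := by
  intro hx
  obtain ⟨A, B, hA, hB, hAB⟩ := hnt
  exact hAB ((hΦ.eq_map_empty_of_map_singleton hx hA).trans
    (hΦ.eq_map_empty_of_map_singleton hx hB).symm)

end IsLatHom

theorem stmt_10 (c d : ℕ) (Φ : Set (E c) → Set (E d))
    (hΦ : IsLatHom Φ) (hnt : NonTrivial Φ)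
    (C : Set (E c)) (hC : IsBody C) (x : E c) (hx : x ∉ C) :
    ¬ Φ {x} ⊆ Φ C ∧ (Φ (convexHull ℝ ({x} ∪ C)) \ Φ C).Nonempty := by
  have hxC : ¬ Φ {x} ⊆ Φ C := by
    intro h
    apply hΦ.map_singleton_ne_map_empty hnt x
    rw [← inter_eq_left.2 h, ← hΦ.map_inter (IsBody.singleton x) hC,
      singleton_inter_eq_empty.2 hx]
  refine ⟨hxC, sdiff_nonempty.2 fun h => hxC (Subset.trans ?_ h)⟩
  exact hΦ.mono (IsBody.singleton x) ((IsBody.singleton x).convexHull_union hC)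
    (subset_union_left.trans (subset_convexHull ℝ _))
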